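/- Let M be a uniquely geodesic metric space with more than one point. Then for every positive integer n, ⌈n²/2⌉ ≤ μ_n(M) ≤ n² − 2n + 2; that is, there exists an n-element subset A ⊆ M with |AT_M(A)| ≥ ⌈n²/2⌉, and every n-element subset A ⊆ M satisfies |AT_M(A)| ≤ n² − 2n + 2. -/

import Mathlib

/-- `(a,b,c)` is a 3-term arithmetic progression in the metric space `M`:
`d(a,b) = d(b,c) = (1/2)·d(a,c)`. -/
def IsAP3 {M : Type*} [MetricSpace M] (a b c : M) : Prop :=
  dist a b = dist b c ∧ dist b c = dist a c / 2

/-- The set of 3-term arithmetic progressions with all entries in `A`. -/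
def AT {M : Type*} [MetricSpace M] (A : Set M) : Set (M × M × M) :=
  {p | p.1 ∈ A ∧ p.2.1 ∈ A ∧ p.2.2 ∈ A ∧ IsAP3 p.1 p.2.1 p.2.2}

/-- `γ : ℝ → M` (restricted to `[0, dist p q]`) is a geodesic from `p` to `q`. -/
def IsGeodesicMap {M : Type*} [MetricSpace M] (p q : M) (γ : ℝ → M) : Prop :=
  γ 0 = p ∧ γ (dist p q) = q ∧
  ∀ s ∈ Set.Icc (0 : ℝ) (dist p q), ∀ t ∈ Set.Icc (0 : ℝ) (dist p q),
    dist (γ s) (γ t) = |s - t|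

/-- `M` is uniquely geodesic. -/
def UniquelyGeodesic (M : Type*) [MetricSpace M] : Prop :=
  ∀ p q : M, p ≠ q →
    (∃ γ : ℝ → M, IsGeodesicMap p q γ) ∧
    ∀ γ₁ γ₂ : ℝ → M, IsGeodesicMap p q γ₁ → IsGeodesicMap p q γ₂ →
      ∀ t ∈ Set.Icc (0 : ℝ) (dist p q), γ₁ t = γ₂ t

/-!
Lower bound: along a geodesic segment, `n` equally spaced points `x₀, …, xₙ₋₁` contain the
progression `(xᵢ, x_{(i+k)/2}, xₖ)` for every pair of indices of equal parity, and at least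
half of the `n²` pairs have equal parity.

Upper bound: a progression `(a, b, c)` is determined by its ends, since geodesics `a → b` and
`b → c` concatenate to the unique geodesic from `a` to `c`, which passes through `b` at half
time. So `|AT(A)| ≤ n² - N`, where `N` counts ordered pairs of distinct points of `A` with no
midpoint in `A`. These pairs form a connected graph on `A`: across any cut, a closest pair has
no midpoint, as a midpoint would be strictly closer to both ends. Hence `N ≥ 2 (n - 1)`.
-/

section

variable {M : Type*} [MetricSpace M]

namespace IsAP3

variable {a m c : M}

theorem symm (h : IsAP3 a m c) : IsAP3 c m a := by
  obtain ⟨h₁, h₂⟩ := h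
  refine ⟨?_, ?_⟩ <;> rw [dist_comm c, dist_comm m a] <;> linarith

theorem dist_left (h : IsAP3 a m c) : dist a m = dist a c / 2 := h.1.trans h.2

theorem dist_add (h : IsAP3 a m c) : dist a m + dist m c = dist a c := by
  rw [h.dist_left, h.2]; ring

theorem dist_left_lt (h : IsAP3 a m c) (hac : a ≠ c) : dist a m < dist a c := by
  rw [h.dist_left]; linarith [dist_pos.2 hac]

theorem dist_right_lt (h : IsAP3 a m c) (hac : a ≠ c) : dist m c < dist a c := by
  rw [h.2]; linarith [dist_pos.2 hac]

end IsAP3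

namespace IsGeodesicMap

variable {p q : M} {γ : ℝ → M}

theorem dist_eq (hγ : IsGeodesicMap p q γ) {s t : ℝ} (hs : s ∈ Set.Icc 0 (dist p q))
    (ht : t ∈ Set.Icc 0 (dist p q)) : dist (γ s) (γ t) = |s - t| :=
  hγ.2.2 s hs t ht

theorem dist_left (hγ : IsGeodesicMap p q γ) {t : ℝ} (ht : t ∈ Set.Icc 0 (dist p q)) :
    dist p (γ t) = t := by
  rw [← hγ.1, hγ.dist_eq ⟨le_rfl, ht.1.trans ht.2⟩ ht, zero_sub, abs_neg, abs_of_nonneg ht.1]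

theorem dist_right (hγ : IsGeodesicMap p q γ) {t : ℝ} (ht : t ∈ Set.Icc 0 (dist p q)) :
    dist (γ t) q = dist p q - t := by
  conv_lhs => rw [← hγ.2.1]
  rw [hγ.dist_eq ht ⟨ht.1.trans ht.2, le_rfl⟩, abs_of_nonpos (by linarith [ht.2])]
  ring

/-- Squeezed between the triangle inequalities through `m` and through `a, c`. -/
theorem dist_append_cross {a m c : M} {γ₁ γ₂ : ℝ → M} (h₁ : IsGeodesicMap a m γ₁)
    (h₂ : IsGeodesicMap m c γ₂) (hamc : dist a c = dist a m + dist m c) {u v : ℝ}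
    (hu : u ∈ Set.Icc 0 (dist a m)) (hv : v - dist a m ∈ Set.Icc 0 (dist m c)) :
    dist (γ₁ u) (γ₂ (v - dist a m)) = v - u := by
  have hum := h₁.dist_right hu
  have hau := h₁.dist_left hu
  have hmv := h₂.dist_left hv
  have hvc := h₂.dist_right hv
  apply le_antisymm
  · linarith [dist_triangle (γ₁ u) m (γ₂ (v - dist a m))]
  · linarith [dist_triangle4 a (γ₁ u) (γ₂ (v - dist a m)) c]

theorem append {a m c : M} {γ₁ γ₂ : ℝ → M} (h₁ : IsGeodesicMap a m γ₁)
    (h₂ : IsGeodesicMap m c γ₂) (hamc : dist a c = dist a m + dist m c) :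
    IsGeodesicMap a c (fun t => if t ≤ dist a m then γ₁ t else γ₂ (t - dist a m)) := by
  have cross : ∀ u ∈ Set.Icc 0 (dist a c), ∀ v ∈ Set.Icc 0 (dist a c), u ≤ dist a m →
      ¬ v ≤ dist a m → dist (γ₁ u) (γ₂ (v - dist a m)) = |u - v| := by
    intro u hu v hv huv hvu
    rw [dist_append_cross h₁ h₂ hamc ⟨hu.1, huv⟩ ⟨by linarith, by linarith [hv.2]⟩,
      abs_of_nonpos (by linarith), neg_sub]
  refine ⟨by simp [h₁.1], ?_, fun s hs t ht => ?_⟩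
  · show (if dist a c ≤ dist a m then γ₁ (dist a c) else γ₂ (dist a c - dist a m)) = c
    rw [hamc]
    split_ifs with h
    · obtain rfl : m = c := dist_le_zero.1 (by linarith)
      simpa using h₁.2.1
    · simpa using h₂.2.1
  dsimp only
  split_ifs with hsm htm htm
  · exact h₁.dist_eq ⟨hs.1, hsm⟩ ⟨ht.1, htm⟩
  · exact cross s hs t ht hsm htm
  · rw [dist_comm, cross t ht s hs htm hsm, abs_sub_comm]
  · rw [h₂.dist_eq ⟨by linarith, by linarith [hs.2]⟩ ⟨by linarith, by linarith [ht.2]⟩]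
    ring_nf

end IsGeodesicMap

namespace UniquelyGeodesic

theorem exists_isGeodesicMap (hM : UniquelyGeodesic M) (p q : M) :
    ∃ γ : ℝ → M, IsGeodesicMap p q γ := by
  obtain rfl | hpq := eq_or_ne p q
  · refine ⟨fun _ => p, rfl, rfl, fun s hs t ht => ?_⟩
    rw [dist_self, Set.Icc_self, Set.mem_singleton_iff] at hs ht
    simp [hs, ht]
  · exact (hM p q hpq).1

theorem eq_of_isAP3 (hM : UniquelyGeodesic M) {a m m' c : M} (h : IsAP3 a m c)
    (h' : IsAP3 a m' c) : m = m' := by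
  obtain rfl | hac := eq_or_ne a c
  · exact (dist_eq_zero.1 (by simpa using h.2)).trans (dist_eq_zero.1 (by simpa using h'.2)).symm
  have through : ∀ m, IsAP3 a m c →
      ∃ γ, IsGeodesicMap a c γ ∧ γ (dist a c / 2) = m := by
    intro m h
    obtain ⟨γ₁, h₁⟩ := hM.exists_isGeodesicMap a m
    obtain ⟨γ₂, h₂⟩ := hM.exists_isGeodesicMap m c
    refine ⟨_, h₁.append h₂ h.dist_add.symm, ?_⟩
    simp [← h.dist_left, h₁.2.1]
  obtain ⟨γ, hγ, rfl⟩ := through m h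
  obtain ⟨γ', hγ', rfl⟩ := through m' h'
  exact (hM a c hac).2 γ γ' hγ hγ' _ ⟨by positivity, half_le_self dist_nonneg⟩

end UniquelyGeodesic

theorem SimpleGraph.ncard_setOf_adj {V : Type*} [Finite V] (G : SimpleGraph V) :
    {p : V × V | G.Adj p.1 p.2}.ncard = 2 * Nat.card G.edgeSet := by
  classical
  have := Fintype.ofFinite V
  let e : G.Dart ≃ {p : V × V | G.Adj p.1 p.2} :=
    { toFun d := ⟨d.toProd, d.adj⟩
      invFun p := ⟨p.1, p.2⟩
      left_inv _ := rfl
      right_inv _ := rfl }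
  rw [← Nat.card_coe_set_eq, ← Nat.card_congr e, Nat.card_eq_fintype_card,
    SimpleGraph.dart_card_eq_twice_card_edges, SimpleGraph.edgeFinset_card,
    Nat.card_eq_fintype_card]

def midpointFreeGraph (A : Set M) : SimpleGraph A where
  Adj a c := a ≠ c ∧ ∀ m ∈ A, ¬ IsAP3 (a : M) m c
  symm := ⟨fun _ _ h => ⟨h.1.symm, fun m hm hm' => h.2 m hm hm'.symm⟩⟩
  loopless := ⟨fun _ h => h.1 rfl⟩

theorem midpointFreeGraph_preconnected {A : Set M} (hA : A.Finite) :
    (midpointFreeGraph A).Preconnected := by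
  have := hA.to_subtype
  intro u v
  by_contra huv
  let G := midpointFreeGraph A
  obtain ⟨⟨a, c⟩, ⟨ha, hc⟩, hmin⟩ := Set.exists_min_image
    {p : A × A | G.Reachable u p.1 ∧ ¬ G.Reachable u p.2} (fun p => dist (p.1 : M) p.2)
    (Set.toFinite _) ⟨(u, v), .refl u, huv⟩
  have hac : a ≠ c := fun h => hc (h ▸ ha)
  refine hc (ha.trans (show G.Adj a c from ⟨hac, fun m hm hm' => ?_⟩).reachable)
  have hac' : (a : M) ≠ c := Subtype.coe_injective.ne hac
  by_cases hum : G.Reachable u ⟨m, hm⟩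
  · exact (hmin (⟨m, hm⟩, c) ⟨hum, hc⟩).not_gt (hm'.dist_right_lt hac')
  · exact (hmin (a, ⟨m, hm⟩) ⟨ha, hum⟩).not_gt (hm'.dist_left_lt hac')

theorem UniquelyGeodesic.ncard_AT_le (hM : UniquelyGeodesic M) {A : Set M} (hA : A.Finite) :
    (AT A).ncard ≤ A.ncard ^ 2 + 2 - 2 * A.ncard := by
  have := hA.to_subtype
  let D := {p : A × A | (midpointFreeGraph A).Adj p.1 p.2}
  have hATD : (AT A).ncard ≤ Dᶜ.ncard := by
    rw [← Nat.card_coe_set_eq, ← Nat.card_coe_set_eq]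
    refine Nat.card_le_card_of_injective
      (fun p => ⟨(⟨p.1.1, p.2.1⟩, ⟨p.1.2.2, p.2.2.2.1⟩), fun hadj => ?_⟩) ?_
    · exact hadj.2 _ p.2.2.1 p.2.2.2.2
    · rintro ⟨⟨a, m, c⟩, hp⟩ ⟨⟨a', m', c'⟩, hp'⟩ h
      simp only [Subtype.mk.injEq, Prod.mk.injEq] at h
      obtain ⟨rfl, rfl⟩ := h
      obtain rfl := hM.eq_of_isAP3 hp.2.2.2 hp'.2.2.2
      rfl
  have hDDc : D.ncard + Dᶜ.ncard = A.ncard ^ 2 := by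
    rw [Set.ncard_add_ncard_compl, Nat.card_prod, Nat.card_coe_set_eq, sq]
  have hD : 2 * (A.ncard - 1) ≤ D.ncard := by
    rw [SimpleGraph.ncard_setOf_adj]
    obtain hA₀ | hA₀ := isEmpty_or_nonempty A
    · simp [← Nat.card_coe_set_eq]
    · have := (SimpleGraph.Connected.mk (midpointFreeGraph_preconnected hA)
        ).card_vert_le_card_edgeSet_add_one
      rw [Nat.card_coe_set_eq] at this
      omega
  omega

open Finset in
theorem sq_le_two_mul_card_filter_even_add (n : ℕ) :
    n ^ 2 ≤ 2 * #{p ∈ range n ×ˢ range n | Even (p.1 + p.2)} := by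
  set E := {i ∈ range n | Even i}
  set O := {i ∈ range n | ¬ Even i}
  have hEO : #E + #O = n := by rw [card_filter_add_card_filter_not, card_range]
  have hsub : E ×ˢ E ∪ O ×ˢ O ⊆ {p ∈ range n ×ˢ range n | Even (p.1 + p.2)} := by
    intro p hp
    simp only [E, O, mem_union, mem_product, mem_filter, mem_range, Nat.not_even_iff_odd] at hp ⊢
    rcases hp with ⟨⟨⟨hi, he⟩, hk, he'⟩⟩ | ⟨⟨hi, ho⟩, hk, ho'⟩
    · exact ⟨⟨hi, hk⟩, he.add he'⟩
    · exact ⟨⟨hi, hk⟩, ho.add_odd ho'⟩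
  have hdisj : Disjoint (E ×ˢ E) (O ×ˢ O) :=
    disjoint_product.2 (Or.inl (disjoint_filter_filter_not _ _ _))
  have hcard := card_le_card hsub
  rw [card_union_of_disjoint hdisj, card_product, card_product] at hcard
  nlinarith [two_mul_le_add_sq #E #O]

section EquallySpaced

variable {x : ℕ → M} {ε : ℝ} {n : ℕ}

theorem isAP3_of_dist_eq_mul_abs (hx : ∀ i < n, ∀ j < n, dist (x i) (x j) = ε * |(i : ℝ) - j|)
    {i j k : ℕ} (hi : i < n) (hk : k < n) (hijk : i + k = 2 * j) :
    IsAP3 (x i) (x j) (x k) := by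
  have hj : j < n := by omega
  have hijk' : (i : ℝ) + k = 2 * j := by exact_mod_cast hijk
  rw [IsAP3, hx i hi j hj, hx j hj k hk, hx i hi k hk,
    show (i : ℝ) - j = j - k by linarith, show (i : ℝ) - k = 2 * (j - k) by linarith, abs_mul,
    abs_two]
  exact ⟨rfl, by ring⟩

theorem injOn_of_dist_eq_mul_abs (hx : ∀ i < n, ∀ j < n, dist (x i) (x j) = ε * |(i : ℝ) - j|)
    (hε : 0 < ε) : Set.InjOn x (Set.Iio n) := by
  intro i hi j hj hij
  have h := hx i hi j hj
  rw [hij, dist_self, eq_comm, mul_eq_zero, abs_eq_zero, sub_eq_zero] at h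
  exact Nat.cast_injective (h.resolve_left hε.ne')

open Finset in
theorem exists_ncard_AT_ge_of_dist_eq_mul_abs
    (hx : ∀ i < n, ∀ j < n, dist (x i) (x j) = ε * |(i : ℝ) - j|) (hε : 0 < ε) :
    ∃ A : Set M, A.Finite ∧ A.ncard = n ∧ (n ^ 2 + 1) / 2 ≤ (AT A).ncard := by
  have hinj := injOn_of_dist_eq_mul_abs hx hε
  set A := x '' Set.Iio n
  have hA : A.Finite := (Set.finite_Iio n).image x
  refine ⟨A, hA, by rw [hinj.ncard_image, Set.ncard_Iio_nat], ?_⟩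
  set P := {p ∈ range n ×ˢ range n | Even (p.1 + p.2)}
  let F : ℕ × ℕ → M × M × M := fun p => (x p.1, x ((p.1 + p.2) / 2), x p.2)
  have hP : ∀ p ∈ P, p.1 < n ∧ p.2 < n ∧ p.1 + p.2 = 2 * ((p.1 + p.2) / 2) := by
    intro p hp
    simp only [P, mem_filter, mem_product, mem_range] at hp
    exact ⟨hp.1.1, hp.1.2, (Nat.two_mul_div_two_of_even hp.2).symm⟩
  have hFP : F '' P ⊆ AT A := by
    rintro _ ⟨p, hp, rfl⟩
    obtain ⟨hi, hk, hik⟩ := hP p hp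
    exact ⟨Set.mem_image_of_mem x hi, Set.mem_image_of_mem x (show (p.1 + p.2) / 2 < n by omega),
      Set.mem_image_of_mem x hk, isAP3_of_dist_eq_mul_abs hx hi hk hik⟩
  have hF : Set.InjOn F P := by
    intro p hp q hq hpq
    simp only [F, Prod.mk.injEq] at hpq
    exact Prod.ext (hinj (hP p hp).1 (hP q hq).1 hpq.1) (hinj (hP p hp).2.1 (hP q hq).2.1 hpq.2.2)
  have hAT : (AT A).Finite :=
    (hA.prod (hA.prod hA)).subset fun p hp => ⟨hp.1, hp.2.1, hp.2.2.1⟩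
  have hcount : n ^ 2 ≤ 2 * #P := sq_le_two_mul_card_filter_even_add n
  calc (n ^ 2 + 1) / 2 ≤ #P := by omega
    _ = (F '' P).ncard := by rw [hF.ncard_image, Set.ncard_coe_finset]
    _ ≤ (AT A).ncard := Set.ncard_le_ncard hFP hAT

end EquallySpaced

theorem IsGeodesicMap.dist_eq_mul_abs {p q : M} {γ : ℝ → M} (hγ : IsGeodesicMap p q γ) {ε : ℝ}
    {n : ℕ} (hε : 0 ≤ ε) (hnε : n * ε ≤ dist p q) :
    ∀ i < n, ∀ j < n, dist (γ (i * ε)) (γ (j * ε)) = ε * |(i : ℝ) - j| := by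
  have hmem : ∀ i < n, (i : ℝ) * ε ∈ Set.Icc 0 (dist p q) := fun i hi =>
    ⟨by positivity, le_trans (by gcongr) hnε⟩
  intro i hi j hj
  rw [hγ.dist_eq (hmem i hi) (hmem j hj), ← sub_mul, abs_mul, abs_of_nonneg hε, mul_comm]

end

theorem mu_bounds_uniquely_geodesic_general {M : Type*} [MetricSpace M] [Nontrivial M]
    (hM : UniquelyGeodesic M) (n : ℕ) :
    (∃ A : Set M, A.Finite ∧ A.ncard = n ∧ (n ^ 2 + 1) / 2 ≤ (AT A).ncard) ∧
    (∀ A : Set M, A.Finite → A.ncard = n → (AT A).ncard ≤ n ^ 2 + 2 - 2 * n) := by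
  obtain ⟨p, q, hpq⟩ := exists_pair_ne M
  obtain ⟨γ, hγ⟩ := (hM p q hpq).1
  have hε : 0 < dist p q / (n + 1) := div_pos (dist_pos.2 hpq) (by positivity)
  have hnε : n * (dist p q / (n + 1)) ≤ dist p q := by
    rw [mul_div_assoc', div_le_iff₀ (by positivity)]
    linarith [dist_nonneg (x := p) (y := q)]
  refine ⟨exists_ncard_AT_ge_of_dist_eq_mul_abs (hγ.dist_eq_mul_abs hε.le hnε) hε, ?_⟩
  rintro A hA rfl
  exact hM.ncard_AT_le hA

/-- In a uniquely geodesic metric space with more than one point,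
`⌈n²/2⌉ ≤ μ_n(M) ≤ n² − 2n + 2`. -/
theorem mu_bounds_uniquely_geodesic {M : Type*} [MetricSpace M] [Nontrivial M]
    (hM : UniquelyGeodesic M) (n : ℕ) (hn : 0 < n) :
    (∃ A : Set M, A.Finite ∧ A.ncard = n ∧ (n ^ 2 + 1) / 2 ≤ (AT A).ncard) ∧
    (∀ A : Set M, A.Finite → A.ncard = n → (AT A).ncard ≤ n ^ 2 + 2 - 2 * n) :=
  mu_bounds_uniquely_geodesic_general hM n
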